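/- Let ℐ be a cellular (Γ,A)-groupoid where Γ is a topological group and A is a graph, and let G be a path-connected topological group. Then the map ı: Rep^G(ℐ) → R̄ep^G_cell(ℐ) is surjective. -/

import Mathlib

/-!
Common definitions for formalizing Hambleton–Hausmann, *Equivariant bundles and
isotropy representations*: `(Γ,A)`-groupoids, split `Γ`-spaces, equivariant
principal `G`-bundles, CW structures, and (cellular) representations.
-/

open Metric Set

namespace EqvBdl

section Groupoid

variable {Γ : Type*} [Group Γ] [TopologicalSpace Γ] {A : Type*} [TopologicalSpace A]

/-- The stalk (slice) of a subset `I ⊆ Γ × A` over a point `a : A`. -/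
def slice (I : Set (Γ × A)) (a : A) : Set Γ := {γ : Γ | (γ, a) ∈ I}

/-- A `(Γ,A)`-groupoid: a subspace of `Γ × A` each of whose slices is a closed
subgroup of `Γ`. -/
structure IsGAGroupoid (I : Set (Γ × A)) : Prop where
  one_mem : ∀ a : A, (1 : Γ) ∈ slice I a
  mul_mem : ∀ a : A, ∀ γ ∈ slice I a, ∀ δ ∈ slice I a, γ * δ ∈ slice I a
  inv_mem : ∀ a : A, ∀ γ ∈ slice I a, γ⁻¹ ∈ slice I a
  isClosed_slice : ∀ a : A, IsClosed (slice I a)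

/-- A `(Γ,A)`-groupoid is weakly locally maximal if every point has a neighbourhood
on which all slices are subgroups of the slice at the point. -/
def WeaklyLocallyMaximal (I : Set (Γ × A)) : Prop :=
  ∀ a : A, ∃ U ∈ nhds a, ∀ u ∈ U, slice I u ⊆ slice I a

/-- A `(Γ,A)`-groupoid is locally maximal if each point `a` and each neighbourhood `B`
of `a` admit an open set `a ∈ U ⊆ B` together with a homotopy `ρ_t : U → U` with
`ρ₀ = id`, `ρ₁ ≡ a` and `ℐ_u ⊆ ℐ_{ρ_t(u)}`. -/
def LocallyMaximalGroupoid (I : Set (Γ × A)) : Prop :=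
  ∀ a : A, ∀ B ∈ nhds a, ∃ U : Set A, IsOpen U ∧ a ∈ U ∧ U ⊆ B ∧
    ∃ ρ : ℝ → A → A,
      ContinuousOn (fun q : ℝ × A => ρ q.1 q.2) (Icc (0 : ℝ) 1 ×ˢ U) ∧
      (∀ t ∈ Icc (0 : ℝ) 1, ∀ u ∈ U, ρ t u ∈ U) ∧
      (∀ u ∈ U, ρ 0 u = u) ∧ (∀ u ∈ U, ρ 1 u = a) ∧
      (∀ t ∈ Icc (0 : ℝ) 1, ∀ u ∈ U, slice I u ⊆ slice I (ρ t u))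

/-- "No small subgroups" relative to a subset `H ⊆ Γ`: there is a neighbourhood of `1`
such that the only subgroup of `Γ` contained in `H` and in this neighbourhood is trivial.
By the Gleason–Yamabe theorem, a compact (Hausdorff) topological group is a Lie group
iff it has no small subgroups; we use this to say that a slice is a compact Lie group. -/
def HasNoSmallSubgroupsIn (H : Set Γ) : Prop :=
  ∃ U ∈ nhds (1 : Γ), ∀ K : Subgroup Γ, (K : Set Γ) ⊆ H ∩ U → K = ⊥

end Groupoid

/-- A split `Γ`-space over `A`: a `Γ`-space `X` with a continuous surjection
`proj : X → A` whose fibers are exactly the `Γ`-orbits, and a continuous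
section `sec` of `proj`. -/
structure SplitGSpace (Γ : Type*) [Group Γ] [TopologicalSpace Γ]
    (A : Type*) [TopologicalSpace A] (X : Type*) [TopologicalSpace X] where
  smul : Γ → X → X
  one_smul : ∀ x : X, smul 1 x = x
  mul_smul : ∀ γ δ : Γ, ∀ x : X, smul (γ * δ) x = smul γ (smul δ x)
  continuous_smul : Continuous fun q : Γ × X => smul q.1 q.2
  proj : X → A
  sec : A → X
  continuous_proj : Continuous proj
  continuous_sec : Continuous sec
  proj_sec : ∀ a : A, proj (sec a) = a
  proj_eq_iff : ∀ x y : X, proj x = proj y ↔ ∃ γ : Γ, y = smul γ x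

namespace SplitGSpace

variable {Γ : Type*} [Group Γ] [TopologicalSpace Γ] {A : Type*} [TopologicalSpace A]
  {X : Type*} [TopologicalSpace X]

/-- The isotropy groupoid of a split `Γ`-space: `{(γ,a) | γ · φ(a) = φ(a)}`. -/
def isotropy (S : SplitGSpace Γ A X) : Set (Γ × A) :=
  {q : Γ × A | S.smul q.1 (S.sec q.2) = S.sec q.2}

end SplitGSpace

section Bundles

variable {Γ : Type*} [Group Γ] [TopologicalSpace Γ] {A : Type*} [TopologicalSpace A]
  {X : Type*} [TopologicalSpace X]

/-- A trivialization of the data `(p, rsmul)` of a principal `G`-bundle over an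
open set `U`: a `G`-equivariant fiber coordinate `τ` such that `(p, τ)` is a
homeomorphism from `p⁻¹(U)` onto `U × G` (with continuous inverse `σ`). -/
def TrivializesOver {G : Type*} [Group G] [TopologicalSpace G]
    {E : Type*} [TopologicalSpace E]
    (p : E → X) (rsmul : E → G → E) (U : Set X) : Prop :=
  ∃ τ : E → G, ContinuousOn τ (p ⁻¹' U) ∧
    (∀ z ∈ p ⁻¹' U, ∀ g : G, τ (rsmul z g) = τ z * g) ∧
    ∃ σ : X × G → E, ContinuousOn σ (U ×ˢ (univ : Set G)) ∧
      (∀ z ∈ p ⁻¹' U, σ (p z, τ z) = z) ∧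
      ∀ q : X × G, q.1 ∈ U → p (σ q) = q.1 ∧ τ (σ q) = q.2

/-- A `Γ`-equivariant principal `G`-bundle over the split `Γ`-space `S`:
a locally trivial principal (right, free) `G`-bundle `p : E → X` with a left
`Γ`-action on `E` commuting with the `G`-action, for which `p` is `Γ`-equivariant. -/
structure EqvBundle (G : Type*) [Group G] [TopologicalSpace G]
    (S : SplitGSpace Γ A X) (E : Type*) [TopologicalSpace E] where
  p : E → X
  continuous_p : Continuous p
  rsmul : E → G → E
  rsmul_one : ∀ z : E, rsmul z 1 = z
  rsmul_mul : ∀ z : E, ∀ g h : G, rsmul z (g * h) = rsmul (rsmul z g) h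
  continuous_rsmul : Continuous fun q : E × G => rsmul q.1 q.2
  rsmul_free : ∀ z : E, ∀ g : G, rsmul z g = z → g = 1
  p_rsmul : ∀ z : E, ∀ g : G, p (rsmul z g) = p z
  lsmul : Γ → E → E
  lsmul_one : ∀ z : E, lsmul 1 z = z
  lsmul_mul : ∀ γ δ : Γ, ∀ z : E, lsmul (γ * δ) z = lsmul γ (lsmul δ z)
  continuous_lsmul : Continuous fun q : Γ × E => lsmul q.1 q.2
  lsmul_rsmul : ∀ γ : Γ, ∀ z : E, ∀ g : G, lsmul γ (rsmul z g) = rsmul (lsmul γ z) g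
  p_lsmul : ∀ γ : Γ, ∀ z : E, p (lsmul γ z) = S.smul γ (p z)
  locTriv : ∀ x : X, ∃ U : Set X, IsOpen U ∧ x ∈ U ∧ TrivializesOver p rsmul U

variable {G : Type*} [Group G] [TopologicalSpace G] {S : SplitGSpace Γ A X}
  {E E' : Type*} [TopologicalSpace E] [TopologicalSpace E']

/-- `φt` is a continuous lift of the section of `S` through the bundle `η`;
the existence of such a lift is equivalent to triviality of the pull-back
of `η` by the section, i.e. to `η` being a split bundle. -/
def IsLift (η : EqvBundle G S E) (φt : A → E) : Prop :=
  Continuous φt ∧ ∀ a : A, η.p (φt a) = S.sec a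

/-- `α` is the isotropy representation of the split bundle `η` with respect to the
lift `φt`, i.e. `γ · φt(a) = φt(a) · α(γ,a)` for all `(γ,a)` in the isotropy groupoid. -/
def IsIsotropyRep (η : EqvBundle G S E) (φt : A → E) (α : Γ × A → G) : Prop :=
  ∀ a : A, ∀ γ : Γ, (γ, a) ∈ S.isotropy → η.lsmul γ (φt a) = η.rsmul (φt a) (α (γ, a))

/-- For abelian `G`, the isotropy representation of any (not necessarily split)
equivariant bundle, defined via local lifts of the section. -/
def IsLocIsotropyRep (η : EqvBundle G S E) (α : Γ × A → G) : Prop :=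
  ∀ a : A, ∃ U ∈ nhds a, ∃ φt : A → E, ContinuousOn φt U ∧
    (∀ u ∈ U, η.p (φt u) = S.sec u) ∧
    ∀ u ∈ U, ∀ γ ∈ slice S.isotropy u, η.lsmul γ (φt u) = η.rsmul (φt u) (α (γ, u))

/-- Isomorphism of `Γ`-equivariant principal `G`-bundles over the identity of `X`. -/
def BundleIso (η : EqvBundle G S E) (η' : EqvBundle G S E') : Prop :=
  ∃ F : E ≃ₜ E', (∀ z : E, η'.p (F z) = η.p z) ∧
    (∀ z : E, ∀ g : G, F (η.rsmul z g) = η'.rsmul (F z) g) ∧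
    ∀ γ : Γ, ∀ z : E, F (η.lsmul γ z) = η'.lsmul γ (F z)

/-- A numerable bundle: it admits a trivializing open cover together with a
subordinate partition of unity. -/
def IsNumerable (η : EqvBundle G S E) : Prop :=
  ∃ (ι : Type) (U : ι → Set X) (pou : PartitionOfUnity ι X Set.univ),
    (∀ i : ι, IsOpen (U i) ∧ TrivializesOver η.p η.rsmul (U i)) ∧ pou.IsSubordinate U

end Bundles

section Reps

variable {Γ : Type*} [Group Γ] [TopologicalSpace Γ] {A : Type*} [TopologicalSpace A]
  {G : Type*} [Group G] [TopologicalSpace G]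

/-- A continuous representation of the `(Γ,A)`-groupoid `I` in `G`: a map,
continuous on `I`, restricting to a group homomorphism on each slice. -/
structure IsContRep (I : Set (Γ × A)) (α : Γ × A → G) : Prop where
  cont : ContinuousOn α I
  map_mul : ∀ a : A, ∀ γ ∈ slice I a, ∀ δ ∈ slice I a, α (γ * δ, a) = α (γ, a) * α (δ, a)

/-- A representation `α` of `I` in `G` is locally maximal if every point `a` has a
neighbourhood `U` with `ℐ_u ⊆ ℐ_a` for `u ∈ U` and a continuous `g : U → G` with
`α_u(γ) = g(u) α_a(γ) g(u)⁻¹` for all `u ∈ U`, `γ ∈ ℐ_u`. -/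
def RepLocallyMaximal (I : Set (Γ × A)) (α : Γ × A → G) : Prop :=
  ∀ a : A, ∃ U ∈ nhds a, (∀ u ∈ U, slice I u ⊆ slice I a) ∧
    ∃ g : A → G, ContinuousOn g U ∧
      ∀ u ∈ U, ∀ γ ∈ slice I u, α (γ, u) = g u * α (γ, a) * (g u)⁻¹

/-- Conjugacy of representations of `I` in `G` by a continuous map `ψ : A → G`. -/
def RepConj (I : Set (Γ × A)) (α α' : Γ × A → G) : Prop :=
  ∃ ψ : A → G, Continuous ψ ∧ ∀ q ∈ I, α' q = (ψ q.2)⁻¹ * α q * ψ q.2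

end Reps

/-- A CW structure on the space `A`: a set of cells with characteristic maps from
euclidean disks, such that the open cells partition `A`, characteristic maps are
injective on the open disk and send the boundary sphere to lower-dimensional cells,
the closure of each cell meets only finitely many cells (closure finiteness), and
`A` carries the weak topology determined by the closed cells. -/
structure CWStruct (A : Type*) [TopologicalSpace A] where
  cell : Type*
  dim : cell → ℕ
  charMap : (e : cell) → EuclideanSpace ℝ (Fin (dim e)) → A
  continuousOn_charMap : ∀ e : cell, ContinuousOn (charMap e) (closedBall 0 1)
  cellOf : A → cell
  cellOf_charMap : ∀ e : cell, ∀ x ∈ ball (0 : EuclideanSpace ℝ (Fin (dim e))) 1,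
    cellOf (charMap e x) = e
  charMap_surj : ∀ a : A, ∃ x ∈ ball (0 : EuclideanSpace ℝ (Fin (dim (cellOf a)))) 1,
    charMap (cellOf a) x = a
  injOn_ball : ∀ e : cell, InjOn (charMap e) (ball 0 1)
  sphere_dim_lt : ∀ e : cell, ∀ x ∈ sphere (0 : EuclideanSpace ℝ (Fin (dim e))) 1,
    dim (cellOf (charMap e x)) < dim e
  closure_finite : ∀ e : cell,
    {f : cell | ∃ x ∈ closedBall (0 : EuclideanSpace ℝ (Fin (dim e))) 1,
      cellOf (charMap e x) = f}.Finite
  weak_topology : ∀ s : Set A,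
    IsClosed s ↔ ∀ e : cell, IsClosed (charMap e ⁻¹' s ∩ closedBall 0 1)

namespace CWStruct

variable {A : Type*} [TopologicalSpace A]

/-- The open cell of `e`. -/
def openCell (C : CWStruct A) (e : C.cell) : Set A := C.charMap e '' ball 0 1

/-- The closed cell of `e`. -/
def closedCell (C : CWStruct A) (e : C.cell) : Set A := C.charMap e '' closedBall 0 1

/-- The center point of the cell `e` (a chosen point of the open cell). -/
def center (C : CWStruct A) (e : C.cell) : A := C.charMap e 0

/-- The face relation on cells: `f ≤ e` iff the open cell of `f` meets the
closed cell of `e`. -/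
def Face (C : CWStruct A) (f e : C.cell) : Prop :=
  ∃ x ∈ closedBall (0 : EuclideanSpace ℝ (Fin (C.dim e))) 1, C.cellOf (C.charMap e x) = f

/-- A graph is a CW-complex of dimension at most 1. -/
def IsGraph (C : CWStruct A) : Prop := ∀ e : C.cell, C.dim e ≤ 1

/-- A regular CW-complex: characteristic maps are injective on the closed disk,
and each boundary sphere maps onto a subcomplex (a union of closed cells). -/
def IsRegular (C : CWStruct A) : Prop :=
  ∀ e : C.cell, InjOn (C.charMap e) (closedBall 0 1) ∧
    ∀ x ∈ sphere (0 : EuclideanSpace ℝ (Fin (C.dim e))) 1,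
      C.closedCell (C.cellOf (C.charMap e x)) ⊆ C.charMap e '' sphere 0 1

end CWStruct

section Cellular

variable {Γ : Type*} [Group Γ] [TopologicalSpace Γ] {A : Type*} [TopologicalSpace A]

/-- A cellular `(Γ,A)`-groupoid: locally maximal, with slices constant on the
open cells of the CW structure `C`. -/
def IsCellular (C : CWStruct A) (I : Set (Γ × A)) : Prop :=
  LocallyMaximalGroupoid I ∧
    ∀ a b : A, C.cellOf a = C.cellOf b → slice I a = slice I b

/-- The group `ℐ(e)` attached by a cellular groupoid to a cell `e`. -/
def cellGrp (C : CWStruct A) (I : Set (Γ × A)) (e : C.cell) : Set Γ :=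
  slice I (C.center e)

/-- A proper `(Γ,A)`-groupoid: a cellular groupoid all of whose slices are compact
Lie groups (compactness together with no small subgroups; by Gleason–Yamabe, a
compact Hausdorff group is Lie iff it has no small subgroups). -/
def IsProper (C : CWStruct A) (I : Set (Γ × A)) : Prop :=
  IsGAGroupoid I ∧ IsCellular C I ∧
    ∀ a : A, IsCompact (slice I a) ∧ HasNoSmallSubgroupsIn (slice I a)

variable {G : Type*} [Group G] [TopologicalSpace G]

/-- `β` is a continuous homomorphism on the subgroup-carrier `H ⊆ Γ`. -/
structure HomOn (H : Set Γ) (β : Γ → G) : Prop where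
  cont : ContinuousOn β H
  map_mul : ∀ γ ∈ H, ∀ δ ∈ H, β (γ * δ) = β γ * β δ

/-- Conjugacy of two maps on `H` by a single element of `G`. -/
def ConjOn (H : Set Γ) (β β' : Γ → G) : Prop :=
  ∃ g : G, ∀ γ ∈ H, β' γ = g⁻¹ * β γ * g

/-- A cellular representation of the cellular groupoid `I` in `G`: a family of
continuous homomorphisms `β_e : ℐ(e) → G` with `β_e = β_f | ℐ(e)` whenever `f ≤ e`. -/
structure IsCellRep (C : CWStruct A) (I : Set (Γ × A)) (β : C.cell → Γ → G) : Prop where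
  hom : ∀ e : C.cell, HomOn (cellGrp C I e) (β e)
  compat : ∀ f e : C.cell, C.Face f e → ∀ γ ∈ cellGrp C I e, β e γ = β f γ

/-- A representative family for an element of `R̄ep^G_cell(ℐ)`: a family of continuous
homomorphisms `β_e : ℐ(e) → G` satisfying the face compatibilities up to conjugacy. -/
structure IsBarCellRep (C : CWStruct A) (I : Set (Γ × A)) (β : C.cell → Γ → G) : Prop where
  hom : ∀ e : C.cell, HomOn (cellGrp C I e) (β e)
  compat : ∀ f e : C.cell, C.Face f e → ConjOn (cellGrp C I e) (β f) (β e)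

/-- The cellular representation on the `k`-skeleton. -/
structure IsCellRepLe (C : CWStruct A) (I : Set (Γ × A)) (k : ℕ) (β : C.cell → Γ → G) :
    Prop where
  hom : ∀ e : C.cell, C.dim e ≤ k → HomOn (cellGrp C I e) (β e)
  compat : ∀ f e : C.cell, C.dim e ≤ k → C.Face f e → ∀ γ ∈ cellGrp C I e, β e γ = β f γ

/-- A `R̄ep_cell` representative family on the `k`-skeleton. -/
structure IsBarCellRepLe (C : CWStruct A) (I : Set (Γ × A)) (k : ℕ) (β : C.cell → Γ → G) :
    Prop where
  hom : ∀ e : C.cell, C.dim e ≤ k → HomOn (cellGrp C I e) (β e)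
  compat : ∀ f e : C.cell, C.dim e ≤ k → C.Face f e → ConjOn (cellGrp C I e) (β f) (β e)

/-- The continuous representation associated to a cellular representation. -/
def toRep (C : CWStruct A) (β : C.cell → Γ → G) : Γ × A → G :=
  fun q => β (C.cellOf q.2) q.1

/-- The restriction of a representation at (the center of) the cell `e`. -/
def restrictAt (C : CWStruct A) (α : Γ × A → G) (e : C.cell) : Γ → G :=
  fun γ => α (γ, C.center e)

/-- `ı([α]) = [β]` in `R̄ep^G_cell(ℐ)`: at each cell, the restriction of `α` is
conjugate to `β_e`. -/
def BarMatches (C : CWStruct A) (I : Set (Γ × A)) (α : Γ × A → G) (β : C.cell → Γ → G) :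
    Prop :=
  ∀ e : C.cell, ConjOn (cellGrp C I e) (restrictAt C α e) (β e)

end Cellular

section GammaCW

variable {Γ : Type*} [Group Γ] [TopologicalSpace Γ] {A : Type*} [TopologicalSpace A]
  {X : Type*} [TopologicalSpace X]

/-- A split `Γ`-CW-complex over `A`: a split `Γ`-space whose isotropy groupoid is
cellular, such that `A` carries the quotient topology and `X` carries the weak
topology determined by the `Γ`-cells `Γ × D^{d(e)} → X`, `(γ,x) ↦ γ·φ(σ_e(x))`. -/
def IsGammaCW (C : CWStruct A) (S : SplitGSpace Γ A X) : Prop :=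
  IsCellular C S.isotropy ∧
  (∀ V : Set A, IsOpen V ↔ IsOpen (S.proj ⁻¹' V)) ∧
  ∀ W : Set X, IsOpen W ↔ ∀ e : C.cell,
    IsOpen {q : Γ × (closedBall (0 : EuclideanSpace ℝ (Fin (C.dim e))) 1) |
      S.smul q.1 (S.sec (C.charMap e q.2.1)) ∈ W}

end GammaCW

section PlainBundles

variable {A : Type*} [TopologicalSpace A]

/-- A (non-equivariant) principal `G`-bundle over `A`. -/
structure PBundle (G : Type*) [Group G] [TopologicalSpace G]
    (A : Type*) [TopologicalSpace A] (F : Type*) [TopologicalSpace F] where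
  p : F → A
  continuous_p : Continuous p
  rsmul : F → G → F
  rsmul_one : ∀ z : F, rsmul z 1 = z
  rsmul_mul : ∀ z : F, ∀ g h : G, rsmul z (g * h) = rsmul (rsmul z g) h
  continuous_rsmul : Continuous fun q : F × G => rsmul q.1 q.2
  rsmul_free : ∀ z : F, ∀ g : G, rsmul z g = z → g = 1
  p_rsmul : ∀ z : F, ∀ g : G, p (rsmul z g) = p z
  locTriv : ∀ a : A, ∃ U : Set A, IsOpen U ∧ a ∈ U ∧ TrivializesOver p rsmul U

variable {G : Type*} [Group G] [TopologicalSpace G]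
  {F F' : Type*} [TopologicalSpace F] [TopologicalSpace F']

/-- Isomorphism of principal `G`-bundles over `A`. -/
def PBundleIso (ξ : PBundle G A F) (ξ' : PBundle G A F') : Prop :=
  ∃ h : F ≃ₜ F', (∀ w : F, ξ'.p (h w) = ξ.p w) ∧
    ∀ w : F, ∀ g : G, h (ξ.rsmul w g) = ξ'.rsmul (h w) g

variable {Γ : Type*} [Group Γ] [TopologicalSpace Γ] {X : Type*} [TopologicalSpace X]

/-- `ξ` is (a model for) the pull-back `φ*η` of the equivariant bundle `η` along
the section `φ` of the split `Γ`-space `S`. -/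
def IsSecPullback {E : Type*} [TopologicalSpace E] {S : SplitGSpace Γ A X}
    (η : EqvBundle G S E) (ξ : PBundle G A F) : Prop :=
  ∃ f : F → E, Continuous f ∧ (∀ w : F, ∀ g : G, f (ξ.rsmul w g) = η.rsmul (f w) g) ∧
    Topology.IsEmbedding (fun w : F => (ξ.p w, f w)) ∧
    Set.range (fun w : F => (ξ.p w, f w)) = {q : A × E | η.p q.2 = S.sec q.1}

/-- `η₃` is (a model for) the tensor product `η₁ ⊗ η₂` of two equivariant principal
`G`-bundles (`G` abelian): there is a quotient map `t` from the fibered product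
`E₁ ×_X E₂` identifying exactly the anti-diagonal `G`-orbits. -/
def IsTensorOf {E₁ E₂ E₃ : Type*} [TopologicalSpace E₁] [TopologicalSpace E₂]
    [TopologicalSpace E₃] {S : SplitGSpace Γ A X}
    (η₁ : EqvBundle G S E₁) (η₂ : EqvBundle G S E₂) (η₃ : EqvBundle G S E₃) : Prop :=
  ∃ t : E₁ × E₂ → E₃,
    ContinuousOn t {q : E₁ × E₂ | η₁.p q.1 = η₂.p q.2} ∧
    (∀ q : E₁ × E₂, η₁.p q.1 = η₂.p q.2 → η₃.p (t q) = η₁.p q.1) ∧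
    (∀ q : E₁ × E₂, η₁.p q.1 = η₂.p q.2 → ∀ g : G,
      t (η₁.rsmul q.1 g, q.2) = η₃.rsmul (t q) g) ∧
    (∀ q : E₁ × E₂, η₁.p q.1 = η₂.p q.2 → ∀ γ : Γ,
      t (η₁.lsmul γ q.1, η₂.lsmul γ q.2) = η₃.lsmul γ (t q)) ∧
    (∀ z : E₃, ∃ q : E₁ × E₂, η₁.p q.1 = η₂.p q.2 ∧ t q = z) ∧
    (∀ q q' : E₁ × E₂, η₁.p q.1 = η₂.p q.2 → η₁.p q'.1 = η₂.p q'.2 →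
      (t q = t q' ↔ ∃ g : G, q'.1 = η₁.rsmul q.1 g ∧ q'.2 = η₂.rsmul q.2 g⁻¹)) ∧
    (∀ W : Set E₃, IsOpen W ↔
      IsOpen {q : {q : E₁ × E₂ // η₁.p q.1 = η₂.p q.2} | t q.1 ∈ W})

/-- `ξ₃` is (a model for) the tensor product `ξ₁ ⊗ ξ₂` of two principal `G`-bundles
over `A` (`G` abelian). -/
def IsTensorOfP {F₁ F₂ F₃ : Type*} [TopologicalSpace F₁] [TopologicalSpace F₂]
    [TopologicalSpace F₃]
    (ξ₁ : PBundle G A F₁) (ξ₂ : PBundle G A F₂) (ξ₃ : PBundle G A F₃) : Prop :=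
  ∃ t : F₁ × F₂ → F₃,
    ContinuousOn t {q : F₁ × F₂ | ξ₁.p q.1 = ξ₂.p q.2} ∧
    (∀ q : F₁ × F₂, ξ₁.p q.1 = ξ₂.p q.2 → ξ₃.p (t q) = ξ₁.p q.1) ∧
    (∀ q : F₁ × F₂, ξ₁.p q.1 = ξ₂.p q.2 → ∀ g : G,
      t (ξ₁.rsmul q.1 g, q.2) = ξ₃.rsmul (t q) g) ∧
    (∀ z : F₃, ∃ q : F₁ × F₂, ξ₁.p q.1 = ξ₂.p q.2 ∧ t q = z) ∧
    (∀ q q' : F₁ × F₂, ξ₁.p q.1 = ξ₂.p q.2 → ξ₁.p q'.1 = ξ₂.p q'.2 →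
      (t q = t q' ↔ ∃ g : G, q'.1 = ξ₁.rsmul q.1 g ∧ q'.2 = ξ₂.rsmul q.2 g⁻¹)) ∧
    (∀ W : Set F₃, IsOpen W ↔
      IsOpen {q : {q : F₁ × F₂ // ξ₁.p q.1 = ξ₂.p q.2} | t q.1 ∈ W})

end PlainBundles

end EqvBdl

/-!
STATEMENT 16 (Lemma 5.8): Let `ℐ` be a cellular `(Γ,A)`-groupoid where `Γ` is a
topological group and `A` is a graph (1-dimensional CW-complex), and let `G` be a
path-connected topological group. Then the map `ı : Rep^G(ℐ) → R̄ep^G_cell(ℐ)` is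
surjective: every compatible-up-to-conjugacy family of homomorphisms on the vertex
and edge groups is realized, up to cell-wise conjugacy, by the restrictions of some
(locally maximal) continuous representation of `ℐ` in `G`.
-/

open EqvBdl


/-!
Choose conjugators `g f e` with `β_e = (g f e)⁻¹ β_f (g f e)` on `ℐ(e)` for each face `f` of `e`,
normalized by `g e e = 1`. As `G` is path connected, each edge `e` carries a path `q e` in `G`
from `g e₋ e` at the end `-1` through `1` at the centre to `g e₊ e` at the end `1`. The
representation is `β_e` conjugated by `q e (t)` at the point with parameter `t` of the open edge
`e`, and `β_v` at a vertex `v`. On the open star of `v` it is `β_v` conjugated by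
`q e (t) (g v e)⁻¹`, which tends to `1` at `v`, so it is locally maximal; local maximality and
continuity on the slices give continuity on `ℐ`. At the cell centres `q e = 1`, so the
restrictions there are the `β_e` themselves.
-/

lemma exists_continuous_real_path_through {X : Type*} [TopologicalSpace X]
    [PathConnectedSpace X] (x y z : X) :
    ∃ q : ℝ → X, Continuous q ∧ q (-1) = x ∧ q 0 = y ∧ q 1 = z := by
  let p₁ := PathConnectedSpace.somePath y x
  let p₂ := PathConnectedSpace.somePath y z
  refine ⟨fun t => if t ≤ 0 then p₁.extend (-t) else p₂.extend t, ?_, ?_, ?_, ?_⟩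
  · refine Continuous.if_le (p₁.continuous_extend.comp continuous_neg) p₂.continuous_extend
      continuous_id continuous_const fun t ht => ?_
    simp only [show t = 0 from ht, neg_zero, Path.extend_zero]
  · simp
  · simp
  · simp

lemma EuclideanSpace.subsingleton_of_eq_zero {n : ℕ} (h : n = 0) :
    Subsingleton (EuclideanSpace ℝ (Fin n)) := by
  subst h
  infer_instance

lemma EuclideanSpace.norm_eq_abs_sum {n : ℕ} (h : n = 1) (x : EuclideanSpace ℝ (Fin n)) :
    ‖x‖ = |∑ i, x i| := by
  subst h
  rw [EuclideanSpace.norm_eq, Fin.sum_univ_one, Fin.sum_univ_one, Real.norm_eq_abs,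
    Real.sqrt_sq_eq_abs, abs_abs]

lemma EuclideanSpace.eq_toLp_const_sum {n : ℕ} (h : n = 1) (x : EuclideanSpace ℝ (Fin n)) :
    x = WithLp.toLp 2 fun _ => ∑ i, x i := by
  subst h
  ext i
  simp [Subsingleton.elim i 0]

namespace EqvBdl

lemma LocallyMaximalGroupoid.weaklyLocallyMaximal {Γ A : Type*} [TopologicalSpace A]
    {I : Set (Γ × A)} (hI : LocallyMaximalGroupoid I) : WeaklyLocallyMaximal I := by
  intro a
  obtain ⟨U, hU, haU, -, ρ, -, -, -, hρ₁, hρ⟩ := hI a univ Filter.univ_mem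
  exact ⟨U, hU.mem_nhds haU, fun u hu => hρ₁ u hu ▸ hρ 1 (right_mem_Icc.2 zero_le_one) u hu⟩

def RepLocallyMaximalAt {Γ A G : Type*} [TopologicalSpace A] [Group G] [TopologicalSpace G]
    (I : Set (Γ × A)) (α : Γ × A → G) (a : A) : Prop :=
  ∃ U ∈ nhds a, (∀ u ∈ U, slice I u ⊆ slice I a) ∧
    ∃ g : A → G, ContinuousOn g U ∧
      ∀ u ∈ U, ∀ γ ∈ slice I u, α (γ, u) = g u * α (γ, a) * (g u)⁻¹

lemma RepLocallyMaximal.continuousOn {Γ A G : Type*} [TopologicalSpace Γ] [TopologicalSpace A]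
    [Group G] [TopologicalSpace G] [IsTopologicalGroup G] {I : Set (Γ × A)} {α : Γ × A → G}
    (hα : RepLocallyMaximal I α)
    (hslice : ∀ a, ContinuousOn (fun γ => α (γ, a)) (slice I a)) :
    ContinuousOn α I := by
  rintro ⟨γ₀, a⟩ hγ₀
  obtain ⟨U, hU, hsub, g, hg, hconj⟩ := hα a
  have hUp : (univ : Set Γ) ×ˢ U ∈ nhds (γ₀, a) := prod_mem_nhds Filter.univ_mem hU
  have hmem : ((γ₀, a) : Γ × A) ∈ I ∩ univ ×ˢ U := ⟨hγ₀, trivial, mem_of_mem_nhds hU⟩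
  have hslice' : ContinuousWithinAt (fun p : Γ × A => α (p.1, a)) (I ∩ univ ×ˢ U) (γ₀, a) :=
    ((hslice a).comp continuous_fst.continuousOn fun p hp => hsub p.2 hp.2.2 hp.1) _ hmem
  have hg' : ContinuousWithinAt (fun p : Γ × A => g p.2) (I ∩ univ ×ˢ U) (γ₀, a) :=
    (ContinuousAt.comp (x := (γ₀, a)) ((hg a hmem.2.2).continuousAt hU)
      continuousAt_snd).continuousWithinAt
  refine (continuousWithinAt_inter hUp).1 (((hg'.mul hslice').mul hg'.inv).congr
    (fun p hp => hconj p.2 hp.2.2 p.1 hp.1) ?_)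
  -- taking `u = a` shows that `g a` centralizes `α_a`
  exact hconj a hmem.2.2 γ₀ hγ₀

namespace CWStruct

variable {A : Type*} [TopologicalSpace A] (C : CWStruct A)

lemma isOpen_of_forall_charMap {s : Set A}
    (h : ∀ e, ∃ O, IsOpen O ∧ C.charMap e ⁻¹' s ∩ closedBall 0 1 = O ∩ closedBall 0 1) :
    IsOpen s := by
  rw [← isClosed_compl_iff, C.weak_topology]
  intro e
  obtain ⟨O, hO, hs⟩ := h e
  have hcompl : C.charMap e ⁻¹' sᶜ ∩ closedBall 0 1 = Oᶜ ∩ closedBall 0 1 := by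
    ext x
    have hx := Set.ext_iff.1 hs x
    simp only [mem_inter_iff, mem_preimage, mem_compl_iff] at hx ⊢
    tauto
  rw [hcompl]
  exact hO.isClosed_compl.inter isClosed_closedBall

lemma continuousOn_of_forall_charMap {Y : Type*} [TopologicalSpace Y] {s : Set A}
    (hs : IsOpen s) {F : A → Y} (h : ∀ e, ∃ φ : EuclideanSpace ℝ (Fin (C.dim e)) → Y,
      ContinuousOn φ (closedBall 0 1) ∧
        ∀ x ∈ closedBall 0 1, C.charMap e x ∈ s → F (C.charMap e x) = φ x) :
    ContinuousOn F s := by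
  refine (continuousOn_open_iff hs).2 fun t ht => C.isOpen_of_forall_charMap fun e => ?_
  obtain ⟨φ, hφ, hFφ⟩ := h e
  obtain ⟨O₁, hO₁, h₁⟩ := continuousOn_iff'.1 (C.continuousOn_charMap e) s hs
  obtain ⟨O₂, hO₂, h₂⟩ := continuousOn_iff'.1 hφ t ht
  refine ⟨O₁ ∩ O₂, hO₁.inter hO₂, Set.ext fun x => ?_⟩
  have hx₁ := Set.ext_iff.1 h₁ x
  have hx₂ := Set.ext_iff.1 h₂ x
  simp only [mem_inter_iff, mem_preimage] at hx₁ hx₂ ⊢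
  by_cases hxs : C.charMap e x ∈ s ∧ x ∈ closedBall 0 1
  · rw [hFφ x hxs.2 hxs.1]
    tauto
  · tauto

noncomputable def coord (a : A) : EuclideanSpace ℝ (Fin (C.dim (C.cellOf a))) :=
  (C.charMap_surj a).choose

lemma coord_mem_ball (a : A) : C.coord a ∈ ball 0 1 := (C.charMap_surj a).choose_spec.1

lemma charMap_coord (a : A) : C.charMap (C.cellOf a) (C.coord a) = a :=
  (C.charMap_surj a).choose_spec.2

/-- On a `1`-cell this is the position of `a` in `(-1, 1)`; at a vertex it is `0`. -/
noncomputable def param (a : A) : ℝ := ∑ i, C.coord a i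

lemma param_charMap {e : C.cell} {x : EuclideanSpace ℝ (Fin (C.dim e))} (hx : x ∈ ball 0 1) :
    C.param (C.charMap e x) = ∑ i, x i := by
  suffices ∀ a, ∀ he : C.cellOf a = e, C.charMap e x = a → C.param a = ∑ i, x i from
    this _ (C.cellOf_charMap e x hx) rfl
  rintro a rfl hxa
  rw [param, C.injOn_ball _ (C.coord_mem_ball a) hx (by rw [charMap_coord, hxa])]

lemma cellOf_center (e : C.cell) : C.cellOf (C.center e) = e :=
  C.cellOf_charMap e 0 (mem_ball_self one_pos)

lemma param_center (e : C.cell) : C.param (C.center e) = 0 := by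
  rw [center, C.param_charMap (mem_ball_self one_pos)]
  simp

lemma eq_center_of_dim_eq_zero {a : A} (h : C.dim (C.cellOf a) = 0) :
    a = C.center (C.cellOf a) := by
  have := EuclideanSpace.subsingleton_of_eq_zero h
  rw [center, ← Subsingleton.elim (C.coord a) 0, charMap_coord]

lemma param_of_dim_eq_zero {a : A} (h : C.dim (C.cellOf a) = 0) : C.param a = 0 := by
  rw [C.eq_center_of_dim_eq_zero h, param_center]

/-- The cell containing the end `s = ±1` of a `1`-cell `e`. -/
noncomputable def endVertex (e : C.cell) (s : ℝ) : C.cell :=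
  C.cellOf (C.charMap e (WithLp.toLp 2 fun _ => s))

lemma face_endVertex {e : C.cell} (he : C.dim e = 1) {s : ℝ} (hs : s = 1 ∨ s = -1) :
    C.Face (C.endVertex e s) e := by
  refine ⟨_, mem_closedBall_zero_iff.2 ?_, rfl⟩
  rw [EuclideanSpace.norm_eq_abs_sum he]
  rcases hs with rfl | rfl <;> simp [he]

lemma cellOf_charMap_of_norm_eq_one {e : C.cell} (he : C.dim e = 1)
    {x : EuclideanSpace ℝ (Fin (C.dim e))} (hx : ‖x‖ = 1) :
    (∑ i, x i = 1 ∨ ∑ i, x i = -1) ∧ C.cellOf (C.charMap e x) = C.endVertex e (∑ i, x i) := by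
  refine ⟨?_, by rw [endVertex, ← EuclideanSpace.eq_toLp_const_sum he]⟩
  rw [EuclideanSpace.norm_eq_abs_sum he] at hx
  exact abs_eq zero_le_one |>.1 hx

lemma dim_cellOf_charMap_of_norm_eq_one {e : C.cell} (he : C.dim e = 1)
    {x : EuclideanSpace ℝ (Fin (C.dim e))} (hx : ‖x‖ = 1) :
    C.dim (C.cellOf (C.charMap e x)) = 0 := by
  have := C.sphere_dim_lt e x (mem_sphere_zero_iff_norm.2 hx)
  omega

/-- The open star of the vertex `v`, cut at the midpoints `param = 0` of the edges. -/
def star (v : C.cell) : Set A :=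
  {a | C.cellOf a = v ∨ (0 < C.param a ∧ C.endVertex (C.cellOf a) 1 = v) ∨
    (C.param a < 0 ∧ C.endVertex (C.cellOf a) (-1) = v)}

lemma center_mem_star (v : C.cell) : C.center v ∈ C.star v := Or.inl (C.cellOf_center v)

lemma charMap_mem_star_iff {v f : C.cell} (hv : C.dim v = 0) (hf : C.dim f = 1)
    {x : EuclideanSpace ℝ (Fin (C.dim f))} (hx : x ∈ closedBall 0 1) :
    C.charMap f x ∈ C.star v ↔
      (0 < ∑ i, x i ∧ C.endVertex f 1 = v) ∨ (∑ i, x i < 0 ∧ C.endVertex f (-1) = v) := by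
  rcases (mem_closedBall_zero_iff.1 hx).lt_or_eq with hlt | heq
  · have hball := mem_ball_zero_iff.2 hlt
    have hfv : f ≠ v := by rintro rfl; omega
    simp [star, C.cellOf_charMap f x hball, C.param_charMap hball, hfv]
  · obtain ⟨hsum, hcell⟩ := C.cellOf_charMap_of_norm_eq_one hf heq
    have h0 := C.dim_cellOf_charMap_of_norm_eq_one hf heq
    rcases hsum with hs | hs <;> simp [star, C.param_of_dim_eq_zero h0, hcell, hs]

variable {C}

lemma IsGraph.dim_eq_zero_or_one (hC : C.IsGraph) (e : C.cell) : C.dim e = 0 ∨ C.dim e = 1 := by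
  have := hC e
  omega

lemma IsGraph.mem_ball_of_dim_cellOf_charMap (hC : C.IsGraph) {e : C.cell}
    {x : EuclideanSpace ℝ (Fin (C.dim e))} (hx : x ∈ closedBall 0 1)
    (h : C.dim (C.cellOf (C.charMap e x)) = 1) : x ∈ ball 0 1 := by
  rcases (mem_closedBall_zero_iff.1 hx).lt_or_eq with hlt | heq
  · exact mem_ball_zero_iff.2 hlt
  · have := C.sphere_dim_lt e x (mem_sphere_zero_iff_norm.2 heq)
    have := hC e
    omega

lemma IsGraph.isOpen_setOf_cellOf_eq (hC : C.IsGraph) {e : C.cell} (he : C.dim e = 1) :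
    IsOpen {a | C.cellOf a = e} := by
  refine C.isOpen_of_forall_charMap fun f => ⟨{_x | f = e} ∩ ball 0 1,
    isOpen_const.inter isOpen_ball, Set.ext fun x => ?_⟩
  simp only [mem_inter_iff, mem_preimage, mem_ofPred_eq]
  constructor
  · rintro ⟨hxe, hx⟩
    have hball := hC.mem_ball_of_dim_cellOf_charMap hx (hxe ▸ he)
    exact ⟨⟨C.cellOf_charMap f x hball ▸ hxe, hball⟩, hx⟩
  · rintro ⟨⟨rfl, hball⟩, hx⟩
    exact ⟨C.cellOf_charMap f x hball, hx⟩

lemma IsGraph.continuousOn_param (hC : C.IsGraph) {e : C.cell} (he : C.dim e = 1) :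
    ContinuousOn C.param {a | C.cellOf a = e} :=
  C.continuousOn_of_forall_charMap (hC.isOpen_setOf_cellOf_eq he) fun _ =>
    ⟨fun x => ∑ i, x i, by fun_prop, fun _ hx hxe =>
      C.param_charMap (hC.mem_ball_of_dim_cellOf_charMap hx ((congrArg C.dim hxe).trans he))⟩

lemma IsGraph.isOpen_star (hC : C.IsGraph) {v : C.cell} (hv : C.dim v = 0) :
    IsOpen (C.star v) := by
  refine C.isOpen_of_forall_charMap fun f => ?_
  rcases hC.dim_eq_zero_or_one f with hf | hf
  · have := EuclideanSpace.subsingleton_of_eq_zero hf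
    exact ⟨_, isOpen_discrete _, rfl⟩
  · refine ⟨(fun x => ∑ i, x i) ⁻¹' ({t | 0 < t ∧ C.endVertex f 1 = v} ∪
      {t | t < 0 ∧ C.endVertex f (-1) = v}), IsOpen.preimage (by fun_prop) ?_,
      Set.ext fun x => ?_⟩
    · exact ((isOpen_lt continuous_const continuous_id).inter isOpen_const).union
        ((isOpen_lt continuous_id continuous_const).inter isOpen_const)
    · simp only [mem_inter_iff, mem_preimage, mem_union, mem_ofPred_eq]
      exact and_congr_left (C.charMap_mem_star_iff hv hf)

lemma IsGraph.cellOf_eq_or_face_of_mem_star (hC : C.IsGraph) {v : C.cell} {a : A}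
    (ha : a ∈ C.star v) : C.cellOf a = v ∨ C.Face v (C.cellOf a) := by
  rcases ha with hav | ha
  · exact Or.inl hav
  have hdim : C.dim (C.cellOf a) = 1 := (hC.dim_eq_zero_or_one _).resolve_left fun h => by
    rcases ha with ⟨h', -⟩ | ⟨h', -⟩ <;> simp [C.param_of_dim_eq_zero h] at h'
  rcases ha with ⟨-, hend⟩ | ⟨-, hend⟩ <;>
    exact Or.inr (hend ▸ C.face_endVertex hdim (by norm_num))

variable {G : Type*}

variable (C) in
noncomputable def twist (q : C.cell → ℝ → G) (a : A) : G := q (C.cellOf a) (C.param a)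

lemma twist_of_dim_eq_zero [One G] {q : C.cell → ℝ → G} (hq : ∀ e, q e 0 = 1) {a : A}
    (ha : C.dim (C.cellOf a) = 0) : C.twist q a = 1 := by
  rw [twist, C.param_of_dim_eq_zero ha, hq]

lemma twist_center [One G] {q : C.cell → ℝ → G} (hq : ∀ e, q e 0 = 1) (e : C.cell) :
    C.twist q (C.center e) = 1 := by
  rw [twist, param_center, hq]

lemma IsGraph.continuousOn_twist [TopologicalSpace G] (hC : C.IsGraph) {q : C.cell → ℝ → G}
    (hq : ∀ e, Continuous (q e)) {e : C.cell} (he : C.dim e = 1) :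
    ContinuousOn (C.twist q) {a | C.cellOf a = e} :=
  ((hq e).comp_continuousOn (hC.continuousOn_param he)).congr fun a ha => by
    rw [twist, show C.cellOf a = e from ha]
    rfl

variable [Group G] [TopologicalSpace G]

variable (C) in
structure IsEdgePath (g : C.cell → C.cell → G) (q : C.cell → ℝ → G) : Prop where
  continuous : ∀ e, Continuous (q e)
  map_zero : ∀ e, q e 0 = 1
  map_one : ∀ e, q e 1 = g (C.endVertex e 1) e
  map_neg_one : ∀ e, q e (-1) = g (C.endVertex e (-1)) e

lemma exists_isEdgePath [PathConnectedSpace G] (C : CWStruct A) (g : C.cell → C.cell → G) :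
    ∃ q, C.IsEdgePath g q := by
  choose q hq hq_neg_one hq_zero hq_one using fun e =>
    exists_continuous_real_path_through (g (C.endVertex e (-1)) e) 1 (g (C.endVertex e 1) e)
  exact ⟨q, hq, hq_zero, hq_one, hq_neg_one⟩

/-- Continuity at `v` holds because the path `q e` ends at `g v e` at every end of `e` lying
at `v`. -/
lemma IsGraph.continuousOn_twist_mul_inv_star [IsTopologicalGroup G] (hC : C.IsGraph)
    {g : C.cell → C.cell → G} (hg : ∀ e, g e e = 1) {q : C.cell → ℝ → G}
    (hq : C.IsEdgePath g q) {v : C.cell} (hv : C.dim v = 0) :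
    ContinuousOn (fun a => C.twist q a * (g v (C.cellOf a))⁻¹) (C.star v) := by
  refine C.continuousOn_of_forall_charMap (hC.isOpen_star hv) fun f => ?_
  rcases hC.dim_eq_zero_or_one f with hf | hf
  · have := EuclideanSpace.subsingleton_of_eq_zero hf
    exact ⟨_, continuous_of_discreteTopology.continuousOn, fun _ _ _ => rfl⟩
  have hqf := hq.continuous f
  refine ⟨fun x => q f (∑ i, x i) * (g v f)⁻¹, by fun_prop, fun x hx hxv => ?_⟩
  rcases (mem_closedBall_zero_iff.1 hx).lt_or_eq with hlt | heq
  · have hball := mem_ball_zero_iff.2 hlt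
    simp only [twist, C.cellOf_charMap f x hball, C.param_charMap hball]
  · obtain ⟨hsum, hcell⟩ := C.cellOf_charMap_of_norm_eq_one hf heq
    have h0 := C.dim_cellOf_charMap_of_norm_eq_one hf heq
    have hxv' : C.cellOf (C.charMap f x) = v := by
      rcases hxv with h | ⟨h, -⟩ | ⟨h, -⟩
      · exact h
      all_goals simp [C.param_of_dim_eq_zero h0] at h
    have hqx : q f (∑ i, x i) = g (C.endVertex f (∑ i, x i)) f := by
      rcases hsum with hs | hs <;> rw [hs] <;> simp [hq.map_one, hq.map_neg_one]
    simp only [twist_of_dim_eq_zero hq.map_zero h0, hqx, ← hcell, hxv', hg, inv_one, one_mul,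
      mul_inv_cancel]

end CWStruct

variable {Γ A G : Type*} [TopologicalSpace A] [Group G]

structure IsFaceConj (C : CWStruct A) (I : Set (Γ × A)) (β : C.cell → Γ → G)
    (g : C.cell → C.cell → G) : Prop where
  self_eq_one : ∀ e, g e e = 1
  conj : ∀ f e, C.Face f e → ∀ γ ∈ cellGrp C I e, β e γ = (g f e)⁻¹ * β f γ * g f e

lemma IsBarCellRep.exists_isFaceConj [Group Γ] [TopologicalSpace Γ] [TopologicalSpace G]
    {C : CWStruct A} {I : Set (Γ × A)} {β : C.cell → Γ → G} (hβ : IsBarCellRep C I β) : ∃ g, IsFaceConj C I β g := by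
  classical
  choose! g hg using hβ.compat
  refine ⟨fun f e => if f = e then 1 else g f e, fun e => if_pos rfl, fun f e hfe γ hγ => ?_⟩
  by_cases hfe' : f = e
  · subst hfe'
    simp
  · simpa only [if_neg hfe'] using hg f e hfe γ hγ

namespace CWStruct

variable {C : CWStruct A} {I : Set (Γ × A)}

lemma slice_eq_cellGrp (hconst : ∀ a b, C.cellOf a = C.cellOf b → slice I a = slice I b)
    (a : A) : slice I a = cellGrp C I (C.cellOf a) :=
  hconst _ _ (C.cellOf_center _).symm

variable (C) in
noncomputable def twistedRep (β : C.cell → Γ → G) (q : C.cell → ℝ → G) : Γ × A → G :=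
  fun p => C.twist q p.2 * β (C.cellOf p.2) p.1 * (C.twist q p.2)⁻¹

variable {β : C.cell → Γ → G} {q : C.cell → ℝ → G}

lemma twistedRep_center (hq : ∀ e, q e 0 = 1) (e : C.cell) (γ : Γ) :
    C.twistedRep β q (γ, C.center e) = β e γ := by
  simp [twistedRep, twist_center hq, cellOf_center]

variable [TopologicalSpace G] [IsTopologicalGroup G]

lemma IsGraph.repLocallyMaximalAt_twistedRep_of_dim_eq_one (hC : C.IsGraph)
    (hconst : ∀ a b, C.cellOf a = C.cellOf b → slice I a = slice I b)
    (hq : ∀ e, Continuous (q e)) {a : A} (ha : C.dim (C.cellOf a) = 1) :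
    RepLocallyMaximalAt I (C.twistedRep β q) a := by
  refine ⟨{u | C.cellOf u = C.cellOf a}, (hC.isOpen_setOf_cellOf_eq ha).mem_nhds rfl,
    fun u hu => (hconst u a hu).le, fun u => C.twist q u * (C.twist q a)⁻¹,
    (hC.continuousOn_twist hq ha).mul continuousOn_const, fun u hu γ _ => ?_⟩
  simp only [twistedRep, show C.cellOf u = C.cellOf a from hu]
  group

lemma IsGraph.repLocallyMaximalAt_twistedRep_of_dim_eq_zero (hC : C.IsGraph)
    (hI : WeaklyLocallyMaximal I)
    (hconst : ∀ a b, C.cellOf a = C.cellOf b → slice I a = slice I b)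
    {g : C.cell → C.cell → G} (hg : IsFaceConj C I β g) (hq : C.IsEdgePath g q) {a : A}
    (ha : C.dim (C.cellOf a) = 0) : RepLocallyMaximalAt I (C.twistedRep β q) a := by
  set v := C.cellOf a
  have hav : a = C.center v := C.eq_center_of_dim_eq_zero ha
  obtain ⟨W, hW, hWa⟩ := hI a
  refine ⟨C.star v ∩ W,
    Filter.inter_mem ((hC.isOpen_star ha).mem_nhds (hav ▸ C.center_mem_star v)) hW,
    fun u hu => hWa u hu.2, _,
    (hC.continuousOn_twist_mul_inv_star hg.self_eq_one hq ha).mono inter_subset_left, ?_⟩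
  rintro u ⟨hu, -⟩ γ hγ
  rw [hav, twistedRep_center hq.map_zero]
  rcases hC.cellOf_eq_or_face_of_mem_star hu with huv | hface
  · simp [twistedRep, huv, twist_of_dim_eq_zero hq.map_zero (huv ▸ ha), hg.self_eq_one]
  · rw [twistedRep, hg.conj v _ hface γ (slice_eq_cellGrp hconst u ▸ hγ)]
    group

lemma IsGraph.repLocallyMaximal_twistedRep (hC : C.IsGraph) (hI : WeaklyLocallyMaximal I)
    (hconst : ∀ a b, C.cellOf a = C.cellOf b → slice I a = slice I b)
    {g : C.cell → C.cell → G} (hg : IsFaceConj C I β g) (hq : C.IsEdgePath g q) :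
    RepLocallyMaximal I (C.twistedRep β q) := fun a =>
  (hC.dim_eq_zero_or_one (C.cellOf a)).elim
    (hC.repLocallyMaximalAt_twistedRep_of_dim_eq_zero hI hconst hg hq)
    (hC.repLocallyMaximalAt_twistedRep_of_dim_eq_one hconst hq.continuous)

lemma isContRep_twistedRep [Group Γ] [TopologicalSpace Γ] (hβ : ∀ e, HomOn (cellGrp C I e) (β e))
    (hconst : ∀ a b, C.cellOf a = C.cellOf b → slice I a = slice I b)
    (hα : RepLocallyMaximal I (C.twistedRep β q)) : IsContRep I (C.twistedRep β q) := by
  refine ⟨hα.continuousOn fun a => ?_, fun a γ hγ δ hδ => ?_⟩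
  · rw [slice_eq_cellGrp hconst a]
    exact ((hβ (C.cellOf a)).cont.const_mul (C.twist q a)).mul_const (C.twist q a)⁻¹
  · rw [slice_eq_cellGrp hconst a] at hγ hδ
    simp only [twistedRep, (hβ _).map_mul γ hγ δ hδ]
    group

end CWStruct

end EqvBdl

theorem iota_surjective_on_graph_general
    {Γ : Type*} [Group Γ] [TopologicalSpace Γ]
    {A : Type*} [TopologicalSpace A] (C : CWStruct A) (hgraph : C.IsGraph)
    (I : Set (Γ × A)) (hcell : IsCellular C I)
    {G : Type*} [Group G] [TopologicalSpace G] [IsTopologicalGroup G]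
    [PathConnectedSpace G] :
    ∀ β : C.cell → Γ → G, IsBarCellRep C I β →
      ∃ α : Γ × A → G, IsContRep I α ∧ RepLocallyMaximal I α ∧ BarMatches C I α β := by
  intro β hβ
  obtain ⟨hlocmax, hconst⟩ := hcell
  obtain ⟨g, hg⟩ := hβ.exists_isFaceConj
  obtain ⟨q, hq⟩ := CWStruct.exists_isEdgePath C g
  have hα := hgraph.repLocallyMaximal_twistedRep hlocmax.weaklyLocallyMaximal hconst hg hq
  refine ⟨C.twistedRep β q, CWStruct.isContRep_twistedRep hβ.hom hconst hα, hα,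
    fun e => ⟨1, fun γ _ => ?_⟩⟩
  simp [restrictAt, CWStruct.twistedRep_center hq.map_zero]

theorem iota_surjective_on_graph
    {Γ : Type*} [Group Γ] [TopologicalSpace Γ] [IsTopologicalGroup Γ]
    {A : Type*} [TopologicalSpace A] (C : CWStruct A) (hgraph : C.IsGraph)
    (I : Set (Γ × A)) (hI : IsGAGroupoid I) (hcell : IsCellular C I)
    {G : Type*} [Group G] [TopologicalSpace G] [IsTopologicalGroup G]
    [PathConnectedSpace G] :
    ∀ β : C.cell → Γ → G, IsBarCellRep C I β →
      ∃ α : Γ × A → G, IsContRep I α ∧ RepLocallyMaximal I α ∧ BarMatches C I α β :=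
  iota_surjective_on_graph_general C hgraph I hcell
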